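/- For every integer m ≥ 1 and every real number a, the average over all type-B permutation tableaux T of size m of a^{U_m(T)} equals a(a+1)(a+2)⋯(a+m-1)/m!, i.e., (1/|B_m|)·Σ_{T ∈ B_m} a^{U_m(T)} = (∏_{i=0}^{m-1} (a+i))/m! (for a > 0 this equals Γ(a+m)/(m!·Γ(a))). -/

import Mathlib

/-- A type-B permutation tableau of size `n`, encoded via its border steps and filling.

Border steps are indexed by `Fin n` (index `i` is the `(i+1)`-th step from the
northeast corner); `west i = true` means the `(i+1)`-th step is a west step
(giving a column) and `west i = false` means it is a south step (giving a row
of the original, unshifted diagram).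

Rows of the shifted diagram are also indexed by `Fin n`: a south step `r` indexes
the corresponding original row, and a west step `r` indexes the inserted diagonal
row whose diagonal cell lies in the column of `r`.  The cell in row `r` and the
column of a west step `c` exists iff (`r` is south and `r < c`) or (`r` is west
and `r ≤ c`); in particular the diagonal cell of the column of `c` is `(c, c)`.
Columns are ordered left-to-right by decreasing step index, rows top-to-bottom as:
diagonal rows by decreasing step index, then original rows by increasing step index.

`filling r c = true` means the cell `(r, c)` contains a 1; `filling` is `false`
outside the cells of the diagram (field `support`).  The fields `col_one`,
`no_bad_zero` and `diag_zero` are the three defining conditions of a type-B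
permutation tableau. -/
structure TypeBTableau (n : ℕ) where
  west : Fin n → Bool
  filling : Fin n → Fin n → Bool
  support : ∀ r c : Fin n, filling r c = true →
    west c = true ∧ ((west r = false ∧ (r : ℕ) < (c : ℕ)) ∨ (west r = true ∧ (r : ℕ) ≤ (c : ℕ)))
  col_one : ∀ c : Fin n, west c = true → ∃ r : Fin n, filling r c = true
  no_bad_zero : ∀ r c : Fin n,
    (west c = true ∧ ((west r = false ∧ (r : ℕ) < (c : ℕ)) ∨ (west r = true ∧ (r : ℕ) ≤ (c : ℕ)))) →
    filling r c = false →
    ¬((∃ r' : Fin n,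
        ((west r' = true ∧ west r = false) ∨
         (west r' = true ∧ west r = true ∧ (r : ℕ) < (r' : ℕ)) ∨
         (west r' = false ∧ west r = false ∧ (r' : ℕ) < (r : ℕ))) ∧
        filling r' c = true) ∧
      (∃ c' : Fin n, (c : ℕ) < (c' : ℕ) ∧ filling r c' = true))
  diag_zero : ∀ j : Fin n, west j = true → filling j j = false →
    ∀ c : Fin n, filling j c = false

namespace TypeBTableau

noncomputable instance instFintype {n : ℕ} : Fintype (TypeBTableau n) :=
  Fintype.ofInjective (fun T => (T.west, T.filling)) (by
    rintro ⟨w1, f1, _, _, _, _⟩ ⟨w2, f2, _, _, _, _⟩ h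
    simp only [Prod.mk.injEq] at h
    obtain ⟨h1, h2⟩ := h
    subst h1; subst h2; rfl)

end TypeBTableau

namespace TypeBTableau

/-- `T.IsCell r c` : the shifted Ferrers diagram of `T` has a cell in row `r` and
in the column of the west step `c`. -/
def IsCell {n : ℕ} (T : TypeBTableau n) (r c : Fin n) : Prop :=
  T.west c = true ∧
    ((T.west r = false ∧ (r : ℕ) < (c : ℕ)) ∨ (T.west r = true ∧ (r : ℕ) ≤ (c : ℕ)))

/-- `T.Above r' r` : row `r'` lies strictly above row `r` in the shifted diagram
(diagonal rows come first, ordered by decreasing step index, followed by the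
original rows ordered by increasing step index). -/
def Above {n : ℕ} (T : TypeBTableau n) (r' r : Fin n) : Prop :=
  (T.west r' = true ∧ T.west r = false) ∨
  (T.west r' = true ∧ T.west r = true ∧ (r : ℕ) < (r' : ℕ)) ∨
  (T.west r' = false ∧ T.west r = false ∧ (r' : ℕ) < (r : ℕ))

/-- The cell `(r, c)` is a restricted 0: it contains a 0 and either has a 1 above
it in its column, or is a diagonal cell. -/
def RestrictedZero {n : ℕ} (T : TypeBTableau n) (r c : Fin n) : Prop :=
  T.IsCell r c ∧ T.filling r c = false ∧
    ((∃ r' : Fin n, T.Above r' r ∧ T.IsCell r' c ∧ T.filling r' c = true) ∨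
      (T.west r = true ∧ r = c))

/-- Row `r` of the shifted diagram is unrestricted: it contains no restricted 0. -/
def Unrestricted {n : ℕ} (T : TypeBTableau n) (r : Fin n) : Prop :=
  ∀ c : Fin n, ¬ T.RestrictedZero r c

instance {n : ℕ} (T : TypeBTableau n) (r c : Fin n) : Decidable (T.RestrictedZero r c) := by
  unfold RestrictedZero IsCell Above; infer_instance

instance {n : ℕ} (T : TypeBTableau n) (r : Fin n) : Decidable (T.Unrestricted r) := by
  unfold Unrestricted; infer_instance

/-- `U_n(T)`, the number of unrestricted rows of `T`. -/
def numUnrestricted {n : ℕ} (T : TypeBTableau n) : ℕ :=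
  (Finset.univ.filter (fun r : Fin n => T.Unrestricted r)).card

end TypeBTableau

/-!
Adding the last border step to a tableau `T` of size `n` is a bijection onto the tableaux of
size `n + 1`. A south step adds an empty, hence unrestricted, bottom row. A west step adds a
leftmost column and a one-cell diagonal row on top of it; the column must contain a 1, and it may
contain 1s only in unrestricted rows of `T`, since such a 1 lies to the left of all other cells
of its row, which therefore may contain no restricted 0. If the new diagonal cell holds a 1, the
unrestricted rows are the new top row and the old unrestricted rows with a 1 in the new column;
if it holds a 0, they are the old unrestricted rows that have a 1 in the new column or lie above
all of its 1s. With `u = U(T)` the weights `a ^ U` of these choices add up to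
`a ^ (u + 1) + a (1 + a) ^ u + a ((1 + a) ^ u - a ^ u) = 2a (1 + a) ^ u`.
So `Z n a = ∑ T, a ^ U(T)` satisfies `Z (n + 1) a = 2a Z n (1 + a)`, whence
`Z n a = 2 ^ n a (a + 1) ⋯ (a + n - 1)` and `|B_n| = Z n 1 = 2 ^ n n!`.
-/

open Finset

namespace Finset

variable {α β R : Type*}

theorem sum_powerset_pow_card [CommSemiring R] (a : R) (s : Finset α) :
    ∑ t ∈ s.powerset, a ^ #t = (1 + a) ^ #s := by
  simpa [add_comm] using sum_pow_mul_eq_add_pow a 1 s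

theorem sum_powerset_nonempty_pow_card_filter_mem_or_forall_le [DecidableEq α] [CommRing R]
    [LinearOrder β] {f : α → β} (hf : Function.Injective f) (a : R) (s : Finset α) :
    ∑ t ∈ s.powerset with t.Nonempty, a ^ #{x ∈ s | x ∈ t ∨ ∀ y ∈ t, f x ≤ f y} =
      a * ((1 + a) ^ #s - a ^ #s) := by
  induction s using Finset.induction_on_min_value f with
  | empty => simp [filter_singleton]
  | insert m s hm hmin ih =>
    have hlt : ∀ x ∈ s, f m < f x := fun x hx =>
      (hmin x hx).lt_of_ne (hf.ne fun h => hm (h ▸ hx))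
    have card_without (t) (ht : t ∈ s.powerset) :
        #{x ∈ insert m s | x ∈ t ∨ ∀ y ∈ t, f x ≤ f y} =
          #{x ∈ s | x ∈ t ∨ ∀ y ∈ t, f x ≤ f y} + 1 := by
      rw [filter_insert, if_pos (Or.inr fun y hy => hmin y (mem_powerset.1 ht hy)),
        card_insert_of_notMem fun h => hm (mem_filter.1 h).1]
    have filter_with (t) (ht : t ∈ s.powerset) :
        {x ∈ insert m s | x ∈ insert m t ∨ ∀ y ∈ insert m t, f x ≤ f y} =
          insert m t := by
      have below_m (x) (hx : x ∈ insert m s) :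
          (x ∈ insert m t ∨ ∀ y ∈ insert m t, f x ≤ f y) ↔ x ∈ insert m t := by
        refine ⟨fun h => h.elim id fun hle => ?_, Or.inl⟩
        obtain rfl | hx := mem_insert.1 hx
        · exact mem_insert_self x t
        · exact absurd (hle m (mem_insert_self m t)) (hlt x hx).not_ge
      rw [filter_congr below_m, filter_mem_eq_inter,
        inter_eq_right.2 (insert_subset_insert m (mem_powerset.1 ht))]
    rw [sum_filter] at ih ⊢
    rw [sum_powerset_insert hm]
    calc _ = ∑ t ∈ s.powerset,
          a * (if t.Nonempty then a ^ #{x ∈ s | x ∈ t ∨ ∀ y ∈ t, f x ≤ f y} else 0) +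
          ∑ t ∈ s.powerset, a * a ^ #t := by
          congr 1 <;> refine sum_congr rfl fun t ht => ?_
          · split_ifs <;> simp [card_without t ht, pow_succ, mul_comm]
          · rw [if_pos (insert_nonempty m t), filter_with t ht,
              card_insert_of_notMem fun h => hm (mem_powerset.1 ht h), pow_succ']
      _ = _ := by
        rw [← mul_sum, ← mul_sum, ih, sum_powerset_pow_card, card_insert_of_notMem hm]
        ring

end Finset

namespace TypeBTableau

variable {n : ℕ}

@[ext]
theorem ext {T₁ T₂ : TypeBTableau n} (hw : T₁.west = T₂.west)
    (hf : T₁.filling = T₂.filling) : T₁ = T₂ := by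
  cases T₁; cases T₂; simp_all

instance (T : TypeBTableau n) (r' r : Fin n) : Decidable (T.Above r' r) := by
  unfold Above; infer_instance

def rowKey (T : TypeBTableau n) (r : Fin n) : ℕ :=
  if T.west r then n - 1 - r else n + r

theorem above_iff_rowKey_lt (T : TypeBTableau n) (r' r : Fin n) :
    T.Above r' r ↔ T.rowKey r' < T.rowKey r := by
  have := r.isLt
  have := r'.isLt
  unfold Above rowKey
  cases T.west r' <;> cases T.west r <;> simp <;> omega

theorem rowKey_injective (T : TypeBTableau n) : Function.Injective T.rowKey := by
  intro r r' h
  have := r.isLt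
  have := r'.isLt
  unfold rowKey at h
  split_ifs at h <;> ext <;> omega

def unrestrictedRows (T : TypeBTableau n) : Finset (Fin n) := {r | T.Unrestricted r}

theorem numUnrestricted_eq_card (T : TypeBTableau n) :
    T.numUnrestricted = #T.unrestrictedRows := rfl

/-- A possible last step after the `n` steps of a tableau: `none` is a south step, `some (S, b)`
a west step whose column has its 1s in the old rows `S` and, iff `b`, in its diagonal cell. -/
abbrev Step (n : ℕ) := Option (Finset (Fin n) × Bool)

def Admissible (T : TypeBTableau n) : Step n → Prop
  | none => True
  | some (S, b) => S ⊆ T.unrestrictedRows ∧ (b = true ∨ S.Nonempty)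

instance (T : TypeBTableau n) : DecidablePred T.Admissible
  | none => inferInstanceAs (Decidable True)
  | some _ => inferInstanceAs (Decidable (_ ∧ _))

def newColumn : Step n → Fin (n + 1) → Bool
  | none => fun _ => false
  | some (S, b) => Fin.lastCases b fun r => decide (r ∈ S)

@[simp] theorem newColumn_none (r : Fin (n + 1)) : newColumn none r = false := rfl

@[simp] theorem newColumn_some_last (S : Finset (Fin n)) (b : Bool) :
    newColumn (some (S, b)) (Fin.last n) = b := by
  simp [newColumn]

@[simp] theorem newColumn_some_castSucc (S : Finset (Fin n)) (b : Bool) (r : Fin n) :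
    newColumn (some (S, b)) r.castSucc = decide (r ∈ S) := by
  simp [newColumn]

theorem Admissible.unrestricted_of_newColumn_castSucc {T : TypeBTableau n} {e : Step n}
    (he : T.Admissible e) {r : Fin n} (h : newColumn e r.castSucc = true) :
    T.Unrestricted r := by
  obtain _ | ⟨S, b⟩ := e
  · simp at h
  · simpa [unrestrictedRows] using he.1 (by simpa using h)

def extend (T : TypeBTableau n) (e : Step n) (he : T.Admissible e) : TypeBTableau (n + 1) where
  west := Fin.lastCases e.isSome T.west
  filling r c := Fin.lastCases (newColumn e r) (fun c => Fin.lastCases false (T.filling · c) r) c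
  support r c h := by
    induction c using Fin.lastCases with
    | last =>
      obtain _ | ⟨S, b⟩ := e
      · simp at h
      · induction r using Fin.lastCases with
        | last => simp
        | cast r => cases hr : T.west r <;> simp [hr, r.isLt, r.isLt.le]
    | cast c =>
      induction r using Fin.lastCases with
      | last => simp at h
      | cast r => simpa using T.support r c (by simpa using h)
  col_one c hc := by
    induction c using Fin.lastCases with
    | last =>
      obtain _ | ⟨S, b⟩ := e
      · simp at hc
      · obtain hb | ⟨r, hr⟩ := he.2
        · exact ⟨Fin.last n, by simpa using hb⟩
        · exact ⟨r.castSucc, by simpa using hr⟩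
    | cast c =>
      obtain ⟨r, hr⟩ := T.col_one c (by simpa using hc)
      exact ⟨r.castSucc, by simpa using hr⟩
  no_bad_zero r c hcell hf := by
    rintro ⟨⟨r', habove, hr'⟩, ⟨c', hcc', hc'⟩⟩
    obtain ⟨c, rfl⟩ := Fin.exists_castSucc_eq.2 (Fin.ne_last_of_lt (Fin.lt_def.2 hcc'))
    have hr_ne : r ≠ Fin.last n := by rintro rfl; simp at hcell; omega
    have hr'_ne : r' ≠ Fin.last n := by rintro rfl; simp at hr'
    obtain ⟨r, rfl⟩ := Fin.exists_castSucc_eq.2 hr_ne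
    obtain ⟨r', rfl⟩ := Fin.exists_castSucc_eq.2 hr'_ne
    simp only [Fin.lastCases_castSucc, Fin.val_castSucc] at hcell hf habove hr'
    induction c' using Fin.lastCases with
    | last =>
      exact he.unrestricted_of_newColumn_castSucc (by simpa using hc') c
        ⟨hcell, hf, Or.inl ⟨r', habove, T.support r' c hr', hr'⟩⟩
    | cast c' =>
      exact T.no_bad_zero r c hcell hf
        ⟨⟨r', habove, hr'⟩, ⟨c', by simpa using hcc', by simpa using hc'⟩⟩
  diag_zero j hj hjj c := by
    induction j using Fin.lastCases with
    | last =>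
      induction c using Fin.lastCases with
      | last => exact hjj
      | cast c => simp
    | cast j =>
      simp only [Fin.lastCases_castSucc] at hj hjj
      induction c using Fin.lastCases with
      | last =>
        by_contra h
        exact he.unrestricted_of_newColumn_castSucc (by simpa using h) j
          ⟨⟨hj, Or.inr ⟨hj, le_rfl⟩⟩, hjj, Or.inr ⟨hj, rfl⟩⟩
      | cast c => simpa using T.diag_zero j hj hjj c

section extend

variable {T : TypeBTableau n} {e : Step n} (he : T.Admissible e)
include he

@[simp] theorem extend_west_last : (T.extend e he).west (Fin.last n) = e.isSome := by
  simp [extend]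

@[simp] theorem extend_west_castSucc (r : Fin n) :
    (T.extend e he).west r.castSucc = T.west r := by
  simp [extend]

@[simp] theorem extend_filling_last (r : Fin (n + 1)) :
    (T.extend e he).filling r (Fin.last n) = newColumn e r := by
  simp [extend]

@[simp] theorem extend_filling_castSucc (r c : Fin n) :
    (T.extend e he).filling r.castSucc c.castSucc = T.filling r c := by
  simp [extend]

@[simp] theorem extend_filling_last_castSucc (c : Fin n) :
    (T.extend e he).filling (Fin.last n) c.castSucc = false := by
  simp [extend]

end extend

def restrict (T : TypeBTableau (n + 1)) : TypeBTableau n where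
  west i := T.west i.castSucc
  filling r c := T.filling r.castSucc c.castSucc
  support r c h := by simpa using T.support _ _ h
  col_one c hc := by
    obtain ⟨r, hr⟩ := T.col_one c.castSucc hc
    induction r using Fin.lastCases with
    | last =>
      have := T.support _ _ hr
      simp at this
      omega
    | cast r => exact ⟨r, hr⟩
  no_bad_zero r c hcell hf := by
    rintro ⟨⟨r', habove, hr'⟩, ⟨c', hcc', hc'⟩⟩
    exact T.no_bad_zero r.castSucc c.castSucc (by simpa using hcell) hf
      ⟨⟨r'.castSucc, by simpa using habove, hr'⟩,
        ⟨c'.castSucc, by simpa using hcc', hc'⟩⟩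
  diag_zero j hj hjj c := T.diag_zero j.castSucc hj hjj c.castSucc

def lastStep (T : TypeBTableau (n + 1)) : Step n :=
  if T.west (Fin.last n) then
    some (({r | T.filling r.castSucc (Fin.last n)} : Finset (Fin n)),
      T.filling (Fin.last n) (Fin.last n))
  else none

theorem filling_last_castSucc (T : TypeBTableau (n + 1)) (c : Fin n) :
    T.filling (Fin.last n) c.castSucc = false := by
  by_contra h
  have := T.support _ _ (Bool.eq_true_of_not_eq_false h)
  simp at this
  omega

theorem admissible_lastStep (T : TypeBTableau (n + 1)) : T.restrict.Admissible T.lastStep := by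
  unfold lastStep
  split_ifs with hw
  · refine ⟨fun r hr => ?_, ?_⟩
    · simp only [unrestrictedRows, mem_filter, mem_univ, true_and] at hr ⊢
      intro c hrc
      obtain ⟨hcell, hf, ⟨r', habove, -, hr'⟩ | ⟨hwr, rfl⟩⟩ := hrc
      · exact T.no_bad_zero r.castSucc c.castSucc hcell hf
          ⟨⟨r'.castSucc, habove, hr'⟩, ⟨Fin.last n, c.isLt, hr⟩⟩
      · simp [T.diag_zero r.castSucc hwr hf] at hr
    · obtain ⟨r, hr⟩ := T.col_one _ hw
      induction r using Fin.lastCases with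
      | last => exact Or.inl hr
      | cast r => exact Or.inr ⟨r, by simpa using hr⟩
  · trivial

theorem extend_restrict (T : TypeBTableau (n + 1)) :
    T.restrict.extend T.lastStep T.admissible_lastStep = T := by
  ext1
  · funext i
    induction i using Fin.lastCases with
    | last => by_cases hw : T.west (Fin.last n) <;> simp [lastStep, hw]
    | cast i => simp [restrict]
  · funext r c
    induction c using Fin.lastCases with
    | last =>
      by_cases hw : T.west (Fin.last n)
      · induction r using Fin.lastCases <;> simp [lastStep, hw]
      · have hr : T.filling r (Fin.last n) = false := by
          simpa using mt (T.support r (Fin.last n) · |>.1) hw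
        simp [lastStep, hw, hr]
    | cast c =>
      induction r using Fin.lastCases with
      | last => simp [filling_last_castSucc]
      | cast r => simp [restrict]

theorem restrict_extend (T : TypeBTableau n) (e : Step n) (he : T.Admissible e) :
    (T.extend e he).restrict = T := by
  ext1 <;> simp [restrict]

theorem lastStep_extend (T : TypeBTableau n) (e : Step n) (he : T.Admissible e) :
    (T.extend e he).lastStep = e := by
  obtain _ | ⟨S, b⟩ := e <;> simp [lastStep]

def extendEquiv : (Σ T : TypeBTableau n, {e // T.Admissible e}) ≃ TypeBTableau (n + 1) where
  toFun x := x.1.extend x.2 x.2.2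
  invFun T := ⟨T.restrict, T.lastStep, T.admissible_lastStep⟩
  left_inv _ := Sigma.subtype_ext (restrict_extend _ _ _) (lastStep_extend _ _ _)
  right_inv := extend_restrict

section unrestricted

variable {T : TypeBTableau n} {e : Step n} (he : T.Admissible e)
include he

theorem above_extend_castSucc (r' r : Fin n) :
    (T.extend e he).Above r'.castSucc r.castSucc ↔ T.Above r' r := by
  simp [Above]

theorem restrictedZero_extend_castSucc (r c : Fin n) :
    (T.extend e he).RestrictedZero r.castSucc c.castSucc ↔ T.RestrictedZero r c := by
  simp [RestrictedZero, IsCell, Fin.exists_fin_succ', above_extend_castSucc]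

theorem not_restrictedZero_extend_last_castSucc (c : Fin n) :
    ¬ (T.extend e he).RestrictedZero (Fin.last n) c.castSucc := by
  simp [RestrictedZero, IsCell]

theorem unrestricted_extend_castSucc_iff (r : Fin n) :
    (T.extend e he).Unrestricted r.castSucc ↔
      T.Unrestricted r ∧ ¬ (T.extend e he).RestrictedZero r.castSucc (Fin.last n) := by
  simp only [Unrestricted, Fin.forall_fin_succ', restrictedZero_extend_castSucc]

theorem unrestricted_extend_last_iff :
    (T.extend e he).Unrestricted (Fin.last n) ↔
      ¬ (T.extend e he).RestrictedZero (Fin.last n) (Fin.last n) := by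
  simp [Unrestricted, Fin.forall_fin_succ', not_restrictedZero_extend_last_castSucc]

end unrestricted

theorem not_restrictedZero_extend_none {T : TypeBTableau n} (he : T.Admissible none)
    (r : Fin (n + 1)) : ¬ (T.extend none he).RestrictedZero r (Fin.last n) :=
  fun h => by simpa using h.1.1

section west

variable {T : TypeBTableau n} {S : Finset (Fin n)} {b : Bool} (he : T.Admissible (some (S, b)))
include he

theorem above_extend_some_last (r : Fin n) :
    (T.extend (some (S, b)) he).Above (Fin.last n) r.castSucc := by
  cases T.west r <;> simp [Above, r.isLt]

theorem restrictedZero_extend_some_castSucc_last_iff (r : Fin n) :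
    (T.extend (some (S, b)) he).RestrictedZero r.castSucc (Fin.last n) ↔
      r ∉ S ∧ (b = true ∨ ∃ r' ∈ S, T.Above r' r) := by
  simp [RestrictedZero, IsCell, Fin.exists_fin_succ', above_extend_castSucc,
    above_extend_some_last, r.isLt, r.isLt.le, or_comm, and_comm]

theorem restrictedZero_extend_some_last_last_iff :
    (T.extend (some (S, b)) he).RestrictedZero (Fin.last n) (Fin.last n) ↔ b = false := by
  simp [RestrictedZero, IsCell]

end west

theorem numUnrestricted_eq_card_castSucc_add (T : TypeBTableau (n + 1)) :
    T.numUnrestricted =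
      #{r : Fin n | T.Unrestricted r.castSucc} + if T.Unrestricted (Fin.last n) then 1 else 0 := by
  rw [numUnrestricted, card_filter, card_filter, Fin.sum_univ_castSucc]

def numUnrestrictedAfter (T : TypeBTableau n) : Step n → ℕ
  | none => T.numUnrestricted + 1
  | some (S, b) =>
    #{r ∈ T.unrestrictedRows | r ∈ S ∨ (b = false ∧ ∀ r' ∈ S, ¬ T.Above r' r)} +
      if b then 1 else 0

theorem numUnrestricted_extend {T : TypeBTableau n} {e : Step n} (he : T.Admissible e) :
    (T.extend e he).numUnrestricted = T.numUnrestrictedAfter e := by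
  rw [numUnrestricted_eq_card_castSucc_add]
  obtain _ | ⟨S, b⟩ := e
  · simp [numUnrestrictedAfter, unrestricted_extend_castSucc_iff, unrestricted_extend_last_iff,
      not_restrictedZero_extend_none, numUnrestricted]
  · simp only [numUnrestrictedAfter, unrestricted_extend_castSucc_iff,
      unrestricted_extend_last_iff, restrictedZero_extend_some_castSucc_last_iff,
      restrictedZero_extend_some_last_last_iff, unrestrictedRows, filter_filter,
      Bool.not_eq_false]
    congr 2
    ext r
    cases b <;> simp [or_iff_not_imp_left]

variable {R : Type*} [CommRing R]

theorem sum_pow_numUnrestrictedAfter (T : TypeBTableau n) (a : R) :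
    ∑ e with T.Admissible e, a ^ T.numUnrestrictedAfter e =
      2 * a * (1 + a) ^ T.numUnrestricted := by
  set U := T.unrestrictedRows
  have admissible_one : ({S | T.Admissible (some (S, true))} : Finset _) = U.powerset := by
    ext; simp [Admissible, U]
  have admissible_zero :
      ({S | T.Admissible (some (S, false))} : Finset _) = {S ∈ U.powerset | S.Nonempty} := by
    ext; simp [Admissible, U]
  have count_one (S) (hS : S ∈ U.powerset) :
      T.numUnrestrictedAfter (some (S, true)) = #S + 1 := by
    simp [numUnrestrictedAfter, filter_mem_eq_inter, inter_eq_right.2 (mem_powerset.1 hS), U]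
  have count_zero (S : Finset (Fin n)) : T.numUnrestrictedAfter (some (S, false)) =
      #{x ∈ U | x ∈ S ∨ ∀ y ∈ S, T.rowKey x ≤ T.rowKey y} := by
    simp [numUnrestrictedAfter, above_iff_rowKey_lt, U]
  have sum_zero : ∑ S ∈ U.powerset with S.Nonempty,
      a ^ #{x ∈ U | x ∈ S ∨ ∀ y ∈ S, T.rowKey x ≤ T.rowKey y} =
        a * ((1 + a) ^ #U - a ^ #U) := by
    convert sum_powerset_nonempty_pow_card_filter_mem_or_forall_le T.rowKey_injective a U
  rw [sum_filter, Fintype.sum_option, if_pos (show T.Admissible none from trivial),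
    Fintype.sum_prod_type]
  simp only [Fintype.sum_bool, sum_add_distrib]
  rw [← sum_filter, ← sum_filter, admissible_one, admissible_zero,
    sum_congr rfl fun S hS => congrArg (a ^ ·) (count_one S hS),
    sum_congr rfl fun S _ => congrArg (a ^ ·) (count_zero S), sum_zero]
  simp only [numUnrestrictedAfter, numUnrestricted_eq_card, pow_succ, ← sum_mul,
    sum_powerset_pow_card]
  ring

theorem sum_pow_numUnrestricted_succ (a : R) :
    ∑ T : TypeBTableau (n + 1), a ^ T.numUnrestricted =
      2 * a * ∑ T : TypeBTableau n, (1 + a) ^ T.numUnrestricted := by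
  rw [← extendEquiv.sum_comp, Fintype.sum_sigma, mul_sum]
  refine sum_congr rfl fun T _ => ?_
  simp only [extendEquiv, Equiv.coe_fn_mk, numUnrestricted_extend]
  rw [← sum_pow_numUnrestrictedAfter, sum_subtype _ fun e => mem_filter_univ e]

instance : Unique (TypeBTableau 0) where
  default := ⟨Fin.elim0, fun i => i.elim0, fun r => r.elim0, fun c => c.elim0,
    fun r => r.elim0, fun j => j.elim0⟩
  uniq _ := ext (funext fun i => i.elim0) (funext fun r => r.elim0)

theorem sum_pow_numUnrestricted (n : ℕ) (a : R) :
    ∑ T : TypeBTableau n, a ^ T.numUnrestricted = 2 ^ n * ∏ i ∈ range n, (a + i) := by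
  induction n generalizing a with
  | zero => simp [numUnrestricted]
  | succ n ih =>
    have shift : ∏ i ∈ range n, (1 + a + i) = ∏ i ∈ range n, (a + (i + 1 : ℕ)) :=
      prod_congr rfl fun i _ => by push_cast; ring
    rw [sum_pow_numUnrestricted_succ, ih, shift, prod_range_succ']
    push_cast
    ring

theorem card_eq_two_pow_mul_factorial (n : ℕ) :
    Fintype.card (TypeBTableau n) = 2 ^ n * n.factorial := by
  have hprod : ∏ i ∈ range n, ((1 : ℤ) + i) = n.factorial := by
    rw [← prod_range_add_one_eq_factorial]
    push_cast
    exact prod_congr rfl fun i _ => add_comm _ _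
  have h := sum_pow_numUnrestricted n (1 : ℤ)
  simp only [one_pow, sum_const, card_univ, nsmul_eq_mul, mul_one, hprod] at h
  exact_mod_cast h

end TypeBTableau

theorem expected_a_pow_unrestricted_general (m : ℕ) (a : ℝ) :
    (1 / (Fintype.card (TypeBTableau m) : ℝ)) *
        ∑ T : TypeBTableau m, a ^ T.numUnrestricted =
      (∏ i ∈ Finset.range m, (a + (i : ℝ))) / (Nat.factorial m : ℝ) := by
  rw [TypeBTableau.sum_pow_numUnrestricted, TypeBTableau.card_eq_two_pow_mul_factorial]
  push_cast
  field_simp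

/-- The average of `a ^ U_m(T)` over all type-B permutation tableaux `T` of size
`m` equals `a(a+1)⋯(a+m-1)/m!`. -/
theorem expected_a_pow_unrestricted (m : ℕ) (hm : 1 ≤ m) (a : ℝ) :
    (1 / (Fintype.card (TypeBTableau m) : ℝ)) *
        ∑ T : TypeBTableau m, a ^ T.numUnrestricted =
      (∏ i ∈ Finset.range m, (a + (i : ℝ))) / (Nat.factorial m : ℝ) :=
  expected_a_pow_unrestricted_general m a
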